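/- arXiv:2305.06619 — 5 statements merged into one kernel-verified Lean document; each statement's English description precedes it below -/
import Mathlib

section
/- The compression capacity of the model (00;C1,C2;f) equals C2. That is, the supremum, over all positive integers k and all admissible k-shot codes (φ1, φ2), of the rate k / max(⌈log|Im φ1| / C1⌉, ⌈log|Im φ2| / C2⌉) equals C2. -/
/-- The componentwise integer sum of two binary vectors. -/
def vsum {k : ℕ} (x y : Fin k → Fin 2) : Fin k → ℕ := fun i => (x i : ℕ) + (y i : ℕ)

/-- The cardinality of the image of an encoding map defined on `A^k`. -/
def imCard {k : ℕ} (φ : (Fin k → Fin 2) → ℕ) : ℕ := (Finset.univ.image φ).card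

/-- Admissibility for the model (00;C1,C2;f): there is a decoder that recovers `x + y`
with zero error from the two encoder outputs `φ1 x` and `φ2 y`. -/
def Admissible00 {k : ℕ} (φ1 φ2 : (Fin k → Fin 2) → ℕ) : Prop :=
  ∃ ψ : ℕ → ℕ → (Fin k → ℕ), ∀ x y : Fin k → Fin 2, ψ (φ1 x) (φ2 y) = vsum x y

/-- The rate of a k-shot code: `k / max(⌈log|Im φ1| / C1⌉, ⌈log|Im φ2| / C2⌉)`,
logarithms in base 2. -/
noncomputable def rate00 (C1 C2 : ℝ) {k : ℕ} (φ1 φ2 : (Fin k → Fin 2) → ℕ) : ℝ :=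
  (k : ℝ) /
    ((max ⌈Real.logb 2 (imCard φ1) / C1⌉ ⌈Real.logb 2 (imCard φ2) / C2⌉ : ℤ) : ℝ)

/-!
An admissible code must have injective encoders (fix one input and read off the other from the
sum), and conversely any pair of injective encoders is admissible. Hence every admissible
`k`-shot code has `|Im φ1| = |Im φ2| = 2^k` and, as `C2 ≤ C1`, rate `k / ⌈k / C2⌉ ≤ C2`; this
rate is attained for every `k` and tends to `C2` as `k → ∞`.
-/

open Filter Topology Function

section Codes

variable {k : ℕ} {φ1 φ2 : (Fin k → Fin 2) → ℕ}

lemma vsum_comm (x y : Fin k → Fin 2) : vsum x y = vsum y x :=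
  funext fun _ => Nat.add_comm _ _

lemma vsum_left_injective (y : Fin k → Fin 2) : Injective fun x => vsum x y :=
  fun _ _ h => funext fun i => Fin.val_injective (Nat.add_right_cancel (congrFun h i))

lemma Admissible00.injective_left (h : Admissible00 φ1 φ2) : Injective φ1 := by
  obtain ⟨ψ, hψ⟩ := h
  intro x x' hx
  apply vsum_left_injective x
  simp only [← hψ, hx]

lemma Admissible00.symm (h : Admissible00 φ1 φ2) : Admissible00 φ2 φ1 := by
  obtain ⟨ψ, hψ⟩ := h
  exact ⟨fun m n => ψ n m, fun y x => (hψ x y).trans (vsum_comm x y)⟩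

lemma admissible00_of_injective (h1 : Injective φ1) (h2 : Injective φ2) :
    Admissible00 φ1 φ2 :=
  ⟨fun n m => vsum (invFun φ1 n) (invFun φ2 m), fun x y => by
    simp only [leftInverse_invFun h1 x, leftInverse_invFun h2 y]⟩

lemma admissible00_iff_injective : Admissible00 φ1 φ2 ↔ Injective φ1 ∧ Injective φ2 :=
  ⟨fun h => ⟨h.injective_left, h.symm.injective_left⟩,
    fun h => admissible00_of_injective h.1 h.2⟩

lemma logb_imCard_of_injective (h : Injective φ1) : Real.logb 2 (imCard φ1) = k := by
  rw [imCard, Finset.card_image_of_injective _ h, Finset.card_univ, Fintype.card_fun,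
    Fintype.card_fin, Fintype.card_fin, Nat.cast_pow, Nat.cast_ofNat, Real.logb_pow,
    Real.logb_self_eq_one one_lt_two, mul_one]

lemma rate00_of_injective {C1 C2 : ℝ} (hC : C2 ≤ C1) (hC2 : 0 < C2)
    (h1 : Injective φ1) (h2 : Injective φ2) :
    rate00 C1 C2 φ1 φ2 = k / ⌈k / C2⌉ := by
  have hle : (k : ℝ) / C1 ≤ k / C2 := div_le_div_of_nonneg_left k.cast_nonneg hC2 hC
  rw [rate00, logb_imCard_of_injective h1, logb_imCard_of_injective h2,
    max_eq_right (Int.ceil_le_ceil hle)]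

end Codes

lemma div_ceil_div_le {C x : ℝ} (hC : 0 < C) (hx : 0 < x) : x / ⌈x / C⌉ ≤ C := by
  have hceil : (0 : ℝ) < ⌈x / C⌉ := by exact_mod_cast Int.ceil_pos.2 (div_pos hx hC)
  rw [div_le_iff₀ hceil, ← div_le_iff₀' hC]
  exact Int.le_ceil _

lemma tendsto_div_ceil_div {C : ℝ} (hC : 0 < C) :
    Tendsto (fun x : ℝ => x / ⌈x / C⌉) atTop (𝓝 C) := by
  have hquot : Tendsto (fun x : ℝ => (⌈x / C⌉ : ℝ) / (x / C)) atTop (𝓝 1) := by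
    refine (tendsto_nat_ceil_div_atTop.comp (tendsto_id.atTop_div_const hC)).congr' ?_
    filter_upwards [eventually_ge_atTop 0] with x hx
    simp only [comp_apply, id, natCast_ceil_eq_intCast_ceil (div_nonneg hx hC.le)]
  have hlim := (tendsto_const_nhds (x := C)).div hquot one_ne_zero
  rw [div_one] at hlim
  refine hlim.congr' ?_
  filter_upwards [eventually_gt_atTop 0] with x hx
  simp only [Pi.div_apply]
  field_simp

theorem capacity_00 (C1 C2 : ℝ) (hC : C2 ≤ C1) (hC2 : 0 < C2) :
    sSup {r : ℝ | ∃ (k : ℕ), 0 < k ∧ ∃ φ1 φ2 : (Fin k → Fin 2) → ℕ,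
      Admissible00 φ1 φ2 ∧ r = rate00 C1 C2 φ1 φ2} = C2 := by
  set S := {r : ℝ | ∃ (k : ℕ), 0 < k ∧ ∃ φ1 φ2 : (Fin k → Fin 2) → ℕ,
      Admissible00 φ1 φ2 ∧ r = rate00 C1 C2 φ1 φ2}
  have hub : ∀ r ∈ S, r ≤ C2 := by
    rintro r ⟨k, hk, φ1, φ2, hadm, rfl⟩
    obtain ⟨h1, h2⟩ := admissible00_iff_injective.1 hadm
    rw [rate00_of_injective hC hC2 h1 h2]
    exact div_ceil_div_le hC2 (Nat.cast_pos.2 hk)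
  have hmem : ∀ k : ℕ, 0 < k → (k / ⌈k / C2⌉ : ℝ) ∈ S := fun k hk =>
    have hinj : Injective (Encodable.encode : (Fin k → Fin 2) → ℕ) := Encodable.encode_injective
    ⟨k, hk, _, _, admissible00_of_injective hinj hinj, (rate00_of_injective hC hC2 hinj hinj).symm⟩
  refine le_antisymm (Real.sSup_le hub hC2.le) <|
    le_of_tendsto ((tendsto_div_ceil_div hC2).comp tendsto_natCast_atTop_atTop) ?_
  filter_upwards [eventually_gt_atTop 0] with k hk
  exact le_csSup ⟨C2, hub⟩ (hmem k hk)
end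

section
/- Let k be a positive integer and let L be a subset of A^k with |L| = ℓ. Then |A^k + L| ≥ 2^k · ℓ^(log 3 − 1), where the exponent log 3 − 1 uses the base-2 logarithm (and 0^(log 3 − 1) is interpreted as 0). -/
/-- The sumset `M + L = {x + y : x ∈ M, y ∈ L}` (componentwise integer sums). -/
def sumSet {k : ℕ} (M L : Finset (Fin k → Fin 2)) : Finset (Fin k → ℕ) :=
  (M ×ˢ L).image fun p => vsum p.1 p.2

open Finset

theorem two_mul_add_rpow_le_of_le {p a b : ℝ} (hp₀ : 0 ≤ p) (hp : 2 * 2 ^ p ≤ (3 : ℝ))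
    (ha : 0 ≤ a) (hab : a ≤ b) : 2 * (a + b) ^ p ≤ a ^ p + 2 * b ^ p := by
  have hp₁ : p ≤ 1 := by
    by_contra! h
    have := Real.rpow_lt_rpow_of_exponent_lt one_lt_two h
    rw [Real.rpow_one] at this
    linarith
  obtain ⟨m, hab_eq⟩ : ∃ m, a + b = 2 * m := ⟨(a + b) / 2, by ring⟩
  rcases (by linarith : 0 ≤ m).eq_or_lt with rfl | hm
  · obtain ⟨rfl, rfl⟩ : a = 0 ∧ b = 0 := ⟨by linarith, by linarith⟩
    rw [hab_eq, mul_zero]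
    linarith [Real.rpow_nonneg le_rfl p]
  -- `a` and `b` are the points with the same weight `t` on the segments `[0, m]` and `[2m, m]`.
  obtain ⟨t, rfl⟩ : ∃ t, a = t * m := ⟨a / m, (div_mul_cancel₀ a hm.ne').symm⟩
  have ht₀ : 0 ≤ t := nonneg_of_mul_nonneg_left ha hm
  have ht₁ : t ≤ 1 := by nlinarith
  have hconc := (Real.concaveOn_rpow hp₀ hp₁).2
  have hta : t * m ^ p ≤ (t * m) ^ p := by
    have := hconc (Set.mem_Ici.2 le_rfl) hm.le (sub_nonneg.2 ht₁) ht₀ (by ring)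
    simp only [smul_eq_mul, mul_zero, zero_add] at this
    linarith [mul_nonneg (sub_nonneg.2 ht₁) (Real.rpow_nonneg (le_refl (0 : ℝ)) p)]
  have htb : (1 - t) * (2 * m) ^ p + t * m ^ p ≤ b ^ p := by
    have := hconc (by positivity : (0 : ℝ) ≤ 2 * m) hm.le (sub_nonneg.2 ht₁) ht₀ (by ring)
    simp only [smul_eq_mul] at this
    rwa [← show b = (1 - t) * (2 * m) + t * m by
      linear_combination hab_eq] at this
  have hmid : 2 * (2 * m) ^ p ≤ 3 * m ^ p := by
    rw [Real.mul_rpow zero_le_two hm.le, ← mul_assoc]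
    exact mul_le_mul_of_nonneg_right hp (by positivity)
  rw [hab_eq]
  linarith [mul_le_mul_of_nonneg_left hmid ht₀]

theorem two_mul_add_rpow_le {p a b : ℝ} (hp₀ : 0 ≤ p) (hp : 2 * 2 ^ p ≤ (3 : ℝ))
    (ha : 0 ≤ a) (hb : 0 ≤ b) : 2 * (a + b) ^ p ≤ a ^ p + b ^ p + max a b ^ p := by
  rcases le_total a b with hab | hba
  · rw [max_eq_right hab]
    linarith [two_mul_add_rpow_le_of_le hp₀ hp ha hab]
  · rw [max_eq_left hba, add_comm a b]
    linarith [two_mul_add_rpow_le_of_le hp₀ hp hb hba]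

theorem two_rpow_logb_three_sub_one : (2 : ℝ) ^ (Real.logb 2 3 - 1) = 3 / 2 := by
  rw [Real.rpow_sub two_pos, Real.rpow_logb two_pos (by norm_num) (by norm_num), Real.rpow_one]

theorem logb_three_sub_one_pos : 0 < Real.logb 2 3 - 1 := by
  rw [sub_pos, Real.lt_logb_iff_rpow_lt one_lt_two (by norm_num), Real.rpow_one]
  norm_num

section Projection

variable {ι α : Type*} [Fintype ι] [DecidableEq ι] [DecidableEq α] [Zero α]

def project (U : Finset ι) (L : Finset (ι → α)) : Finset (ι → α) :=
  L.image fun y => U.piecewise y 0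

theorem project_univ (L : Finset (ι → α)) : project univ L = L := by
  simp [project]

theorem card_project_empty_le_one (L : Finset (ι → α)) : #(project ∅ L) ≤ 1 :=
  card_le_one.2 fun _ hw _ hw' => by
    obtain ⟨_, -, rfl⟩ := mem_image.1 hw
    obtain ⟨_, -, rfl⟩ := mem_image.1 hw'
    simp

theorem project_mono {U : Finset ι} {L L' : Finset (ι → α)} (h : L' ⊆ L) :
    project U L' ⊆ project U L :=
  image_subset_image h

theorem apply_eq_zero_of_mem_project {U : Finset ι} {L : Finset (ι → α)} {w : ι → α}
    (hw : w ∈ project U L) {i : ι} (hi : i ∉ U) : w i = 0 := by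
  obtain ⟨y, -, rfl⟩ := mem_image.1 hw
  exact piecewise_eq_of_notMem _ _ _ hi

theorem card_project_insert [Fintype α] {a : ι} {U : Finset ι} (ha : a ∉ U)
    (L : Finset (ι → α)) :
    #(project (insert a U) L) = ∑ v, #(project U {y ∈ L | y a = v}) := by
  rw [card_eq_sum_card_fiberwise (f := fun w : ι → α => w a) (t := univ) (by simp)]
  refine sum_congr rfl fun v _ => ?_
  have hfiber : {w ∈ project (insert a U) L | w a = v} =
      (project U {y ∈ L | y a = v}).image fun w : ι → α => Function.update w a v := by
    simp only [project, filter_image, image_image, piecewise_eq_of_mem _ _ _ (mem_insert_self a U)]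
    refine image_congr fun y hy => ?_
    simp_all [piecewise_insert]
  rw [hfiber, card_image_of_injOn]
  intro w hw w' hw' h
  have hundo : ∀ u : ι → α, u a = 0 → Function.update (Function.update u a v) a 0 = u :=
    fun u hu => by rw [Function.update_idem, Function.update_eq_self_iff, hu]
  rw [← hundo w (apply_eq_zero_of_mem_project hw ha),
    ← hundo w' (apply_eq_zero_of_mem_project hw' ha)]
  exact congrArg (Function.update · a 0) h

theorem two_pow_card_mul_card_project_rpow_le_sum {p : ℝ} (hp₀ : 0 < p)
    (hp : 2 * 2 ^ p ≤ (3 : ℝ)) (s : Finset ι) (L : Finset (ι → Fin 2)) :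
    (2 : ℝ) ^ #s * (#(project s L) : ℝ) ^ p ≤ ∑ U ∈ s.powerset, (#(project U L) : ℝ) := by
  induction s using Finset.induction_on generalizing L with
  | empty =>
    rw [card_empty, pow_zero, one_mul, powerset_empty, sum_singleton]
    rcases Nat.le_one_iff_eq_zero_or_eq_one.1 (card_project_empty_le_one L) with h | h <;>
      simp [h, hp₀.ne']
  | @insert a s ha ih =>
    set L₀ := {y ∈ L | y a = 0}
    set L₁ := {y ∈ L | y a = 1}
    have hsplit : ∀ U ⊆ s, (#(project (insert a U) L) : ℝ) = #(project U L₀) + #(project U L₁) :=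
      fun U hU => by
        rw [card_project_insert (fun haU => ha (hU haU)), Fin.sum_univ_two, Nat.cast_add]
    have hle_sum : ∀ L' ⊆ L, (2 : ℝ) ^ #s * (#(project s L') : ℝ) ^ p ≤
        ∑ U ∈ s.powerset, (#(project U L) : ℝ) := fun L' hL' =>
      (ih L').trans <| sum_le_sum fun U _ => by
        exact_mod_cast card_le_card (project_mono hL')
    set n₀ : ℝ := ↑(#(project s L₀))
    set n₁ : ℝ := ↑(#(project s L₁))
    have hmax : (2 : ℝ) ^ #s * max n₀ n₁ ^ p ≤ ∑ U ∈ s.powerset, (#(project U L) : ℝ) := by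
      rcases max_choice n₀ n₁ with h | h <;> rw [h]
      exacts [hle_sum L₀ (filter_subset _ _), hle_sum L₁ (filter_subset _ _)]
    rw [sum_powerset_insert ha, sum_congr rfl fun U hU => hsplit U (mem_powerset.1 hU),
      sum_add_distrib, hsplit s subset_rfl, card_insert_of_notMem ha, pow_succ]
    calc (2 : ℝ) ^ #s * 2 * (n₀ + n₁) ^ p = 2 ^ #s * (2 * (n₀ + n₁) ^ p) := by ring
      _ ≤ 2 ^ #s * (n₀ ^ p + n₁ ^ p + max n₀ n₁ ^ p) := by
        gcongr
        exact two_mul_add_rpow_le hp₀.le hp (Nat.cast_nonneg _) (Nat.cast_nonneg _)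
      _ ≤ _ := by linarith [ih L₀, ih L₁]

end Projection

section DoubleOn

variable {ι : Type*} [DecidableEq ι]

def doubleOn (U : Finset ι) (w : ι → Fin 2) : ι → ℕ :=
  U.piecewise (fun i => 2 * (w i : ℕ)) 1

theorem doubleOn_apply_ne_one_iff {U : Finset ι} {w : ι → Fin 2} {i : ι} :
    doubleOn U w i ≠ 1 ↔ i ∈ U := by
  by_cases hi : i ∈ U <;> simp [doubleOn, hi]

theorem doubleOn_piecewise_zero (U : Finset ι) (w : ι → Fin 2) :
    doubleOn U (U.piecewise w 0) = doubleOn U w := by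
  ext i
  by_cases hi : i ∈ U <;> simp [doubleOn, hi]

theorem doubleOn_injOn_project [Fintype ι] (U : Finset ι) (L : Finset (ι → Fin 2)) :
    Set.InjOn (doubleOn U) (project U L) := by
  intro w hw w' hw' h
  ext i
  by_cases hi : i ∈ U
  · simpa [doubleOn, hi] using congrFun h i
  · rw [apply_eq_zero_of_mem_project hw hi, apply_eq_zero_of_mem_project hw' hi]

theorem fin_two_val_add_val_eq_ite (x y : Fin 2) :
    (x : ℕ) + y = if x = y then 2 * (y : ℕ) else 1 := by
  revert x y
  decide

theorem exists_filter_apply_eq_apply_eq [Fintype ι] (U : Finset ι) (y : ι → Fin 2) :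
    ∃ x : ι → Fin 2, ({i | x i = y i} : Finset ι) = U := by
  refine ⟨U.piecewise y (y + 1), ?_⟩
  ext i
  by_cases hi : i ∈ U <;> simp [hi]

end DoubleOn

-- Binary digits sum to `1` exactly where they differ.
theorem vsum_eq_doubleOn {k : ℕ} (x y : Fin k → Fin 2) :
    vsum x y = doubleOn {i | x i = y i} y := by
  ext i
  by_cases h : x i = y i <;> simp [vsum, doubleOn, h, fin_two_val_add_val_eq_ite]

theorem sumSet_univ_eq_biUnion {k : ℕ} (L : Finset (Fin k → Fin 2)) :
    sumSet univ L = univ.biUnion fun U => (project U L).image (doubleOn U) := by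
  ext z
  simp only [sumSet, project, mem_image, mem_biUnion, mem_product, mem_univ, true_and,
    exists_exists_and_eq_and, doubleOn_piecewise_zero, Prod.exists]
  constructor
  · rintro ⟨x, y, hy, rfl⟩
    exact ⟨_, y, hy, (vsum_eq_doubleOn x y).symm⟩
  · rintro ⟨U, y, hy, rfl⟩
    obtain ⟨x, rfl⟩ := exists_filter_apply_eq_apply_eq U y
    exact ⟨x, y, hy, vsum_eq_doubleOn x y⟩

theorem card_sumSet_univ {k : ℕ} (L : Finset (Fin k → Fin 2)) :
    #(sumSet univ L) = ∑ U, #(project U L) := by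
  rw [sumSet_univ_eq_biUnion, card_biUnion]
  · exact sum_congr rfl fun U _ => card_image_of_injOn (doubleOn_injOn_project U L)
  · intro U _ V _ hUV
    simp only [Function.onFun, disjoint_left, mem_image]
    rintro _ ⟨w, -, rfl⟩ ⟨w', -, h⟩
    refine hUV (ext fun i => ?_)
    rw [← doubleOn_apply_ne_one_iff (w := w), ← doubleOn_apply_ne_one_iff (w := w'), h]

theorem sumSet_card_lower_bound_general (k : ℕ) (L : Finset (Fin k → Fin 2)) :
    (2 : ℝ) ^ k * (L.card : ℝ) ^ (Real.logb 2 3 - 1) ≤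
      ((sumSet (Finset.univ : Finset (Fin k → Fin 2)) L).card : ℝ) := by
  have h := two_pow_card_mul_card_project_rpow_le_sum logb_three_sub_one_pos
    (by rw [two_rpow_logb_three_sub_one]; norm_num) (univ : Finset (Fin k)) L
  rwa [project_univ, card_univ, Fintype.card_fin, powerset_univ, ← Nat.cast_sum,
    ← card_sumSet_univ] at h

theorem sumSet_card_lower_bound (k : ℕ) (hk : 0 < k) (L : Finset (Fin k → Fin 2)) :
    (2 : ℝ) ^ k * (L.card : ℝ) ^ (Real.logb 2 3 - 1) ≤
      ((sumSet (Finset.univ : Finset (Fin k → Fin 2)) L).card : ℝ) :=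
  sumSet_card_lower_bound_general k L
end

section
/- Let ℓ_a and ℓ_b be nonnegative integers with ℓ_a ≥ ℓ_b and set ℓ = ℓ_a + ℓ_b. Then 2·ℓ_a^(log 3 − 1) + ℓ_b^(log 3 − 1) ≥ 2·ℓ^(log 3 − 1), where the exponent log 3 − 1 uses the base-2 logarithm (and 0^(log 3 − 1) is interpreted as 0). -/
/-!
With `p = log 3 - 1` we have `2 ^ p = 3 / 2`, so the claim reads
`(ℓ_a + ℓ_b) ^ p - ℓ_a ^ p ≤ (2 ^ p - 1) ℓ_b ^ p = (2 ℓ_b) ^ p - ℓ_b ^ p`.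
This holds because `x ↦ x ^ p` is concave for `0 ≤ p ≤ 1`, so its increments over an interval of
length `ℓ_b` decrease as the interval moves right, from `[ℓ_b, 2 ℓ_b]` to `[ℓ_a, ℓ_a + ℓ_b]`.
-/

open Real Set

theorem ConcaveOn.add_sub_le_add_sub_of_le {𝕜 : Type*} [Field 𝕜] [LinearOrder 𝕜]
    [IsStrictOrderedRing 𝕜] {s : Set 𝕜} {f : 𝕜 → 𝕜} (hf : ConcaveOn 𝕜 s f) {x y h : 𝕜}
    (hx : x ∈ s) (hyh : y + h ∈ s) (hxy : x ≤ y) (hh : 0 ≤ h) :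
    f (y + h) - f y ≤ f (x + h) - f x := by
  rcases eq_or_lt_of_le (show x ≤ y + h by linarith) with hx_eq | hx_lt
  · obtain rfl : h = 0 := by linarith
    obtain rfl : y = x := by linarith
    rfl
  -- `y` and `x + h` are the convex combinations of `x` and `y + h` with swapped weights.
  set d := y + h - x
  have hd : 0 < d := sub_pos.2 hx_lt
  have hab : h / d + (y - x) / d = 1 := by field_simp; ring
  have hy : h / d * x + (y - x) / d * (y + h) = y := by field_simp; ring
  have hxh : (y - x) / d * x + h / d * (y + h) = x + h := by field_simp; ring
  have ha : 0 ≤ h / d := div_nonneg hh hd.le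
  have hb : 0 ≤ (y - x) / d := div_nonneg (sub_nonneg.2 hxy) hd.le
  have h₁ := hf.2 hx hyh ha hb hab
  have h₂ := hf.2 hx hyh hb ha ((add_comm _ _).trans hab)
  simp only [smul_eq_mul, hy, hxh] at h₁ h₂
  linear_combination h₁ + h₂ - (f x + f (y + h)) * hab

theorem Real.rpow_add_sub_rpow_le {p : ℝ} (hp₀ : 0 ≤ p) (hp₁ : p ≤ 1) {a b : ℝ} (hb : 0 ≤ b)
    (hba : b ≤ a) : (a + b) ^ p - a ^ p ≤ (2 ^ p - 1) * b ^ p :=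
  calc (a + b) ^ p - a ^ p ≤ (b + b) ^ p - b ^ p :=
        (Real.concaveOn_rpow hp₀ hp₁).add_sub_le_add_sub_of_le hb
          (mem_Ici.2 (by linarith)) hba hb
    _ = (2 ^ p - 1) * b ^ p := by rw [← two_mul, mul_rpow zero_le_two hb]; ring

theorem aitch_function_inequality (la lb : ℕ) (h : lb ≤ la) :
    2 * ((la + lb : ℕ) : ℝ) ^ (Real.logb 2 3 - 1) ≤
      2 * (la : ℝ) ^ (Real.logb 2 3 - 1) + (lb : ℝ) ^ (Real.logb 2 3 - 1) := by
  have h_two_rpow : (2 : ℝ) ^ (logb 2 3 - 1) = 3 / 2 := by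
    rw [rpow_sub two_pos, rpow_logb two_pos (by norm_num) (by norm_num), rpow_one]
  have hp₀ : 0 ≤ logb 2 3 - 1 :=
    sub_nonneg.2 ((le_logb_iff_rpow_le one_lt_two (by norm_num)).2 (by norm_num))
  have hp₁ : logb 2 3 - 1 ≤ 1 := by
    have : logb 2 3 ≤ 2 := (logb_le_iff_le_rpow one_lt_two (by norm_num)).2 (by norm_num)
    linarith
  have key := rpow_add_sub_rpow_le hp₀ hp₁ (Nat.cast_nonneg lb) (Nat.cast_le.2 h)
  rw [h_two_rpow] at key
  push_cast
  linarith
end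

section
/- The exponent log 3 − 1 is maximal for the aitch-function inequality: for every real τ with τ > log 3 − 1, there exist nonnegative integers ℓ_a ≥ ℓ_b with ℓ = ℓ_a + ℓ_b such that 2·ℓ_a^τ + ℓ_b^τ < 2·ℓ^τ. -/
theorem three_lt_two_mul_two_rpow {τ : ℝ} (hτ : Real.logb 2 3 - 1 < τ) :
    (3 : ℝ) < 2 * 2 ^ τ := by
  have h : (3 : ℝ) < 2 ^ (τ + 1) :=
    (Real.logb_lt_iff_lt_rpow one_lt_two three_pos).mp (by linarith)
  rwa [Real.rpow_add_one two_ne_zero, mul_comm] at h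

theorem aitch_exponent_maximal (τ : ℝ) (hτ : Real.logb 2 3 - 1 < τ) :
    ∃ la lb : ℕ, lb ≤ la ∧
      2 * (la : ℝ) ^ τ + (lb : ℝ) ^ τ < 2 * ((la + lb : ℕ) : ℝ) ^ τ := by
  refine ⟨1, 1, le_rfl, ?_⟩
  norm_num
  linarith [three_lt_two_mul_two_rpow hτ]
end

section
/- For every positive integer k, the minimum of |{x + y : x ∈ {0,1}^k, y ∈ L}| over all two-element subsets L ⊆ {0,1,2}^k equals 3 · 2^(k−1). -/
/-!
The set `{0,1}^k + y` is the unit cube `∏ i, [y i, y i + 1]` of `2^k` lattice points, so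
`|{0,1}^k + {a, b}| = 2 · 2^k - |cube a ∩ cube b|`, and the intersection of two cubes is the
product of the one-dimensional intersections `[a i, a i + 1] ∩ [b i, b i + 1]`. Each factor has at
most two points, and at a coordinate where `a` and `b` differ at most one, so the intersection has
at most `2^(k-1)` points. Equality holds for `a = 0` and `b = e₁`.
-/

/-- The componentwise integer sum of a binary vector and a ternary vector. -/
def vsum23 {k : ℕ} (x : Fin k → Fin 2) (y : Fin k → Fin 3) : Fin k → ℕ :=
  fun i => (x i : ℕ) + (y i : ℕ)

/-- The sumset `{0,1}^k + L` for `L ⊆ {0,1,2}^k`. -/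
def sumSet23 {k : ℕ} (L : Finset (Fin k → Fin 3)) : Finset (Fin k → ℕ) :=
  ((Finset.univ : Finset (Fin k → Fin 2)) ×ˢ L).image fun p => vsum23 p.1 p.2

open Finset Fintype

section UnitCube

variable {ι : Type*} [Fintype ι] [DecidableEq ι]

def unitCube (a : ι → ℕ) : Finset (ι → ℕ) :=
  piFinset fun i => Icc (a i) (a i + 1)

lemma card_unitCube (a : ι → ℕ) : #(unitCube a) = 2 ^ card ι := by
  simp [unitCube, add_assoc]

lemma card_Icc_inter_Icc_le_two (s t : ℕ) : #(Icc s (s + 1) ∩ Icc t (t + 1)) ≤ 2 :=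
  (card_le_card inter_subset_left).trans (by rw [Nat.card_Icc]; omega)

lemma card_Icc_inter_Icc_le_one_of_ne {s t : ℕ} (hst : s ≠ t) :
    #(Icc s (s + 1) ∩ Icc t (t + 1)) ≤ 1 := by
  refine card_le_one.mpr fun x hx y hy => ?_
  simp only [mem_inter, mem_Icc] at hx hy
  omega

lemma card_unitCube_union_add_prod (a b : ι → ℕ) :
    #(unitCube a ∪ unitCube b) + ∏ i, #(Icc (a i) (a i + 1) ∩ Icc (b i) (b i + 1)) =
      2 * 2 ^ card ι := by
  have hinter : unitCube a ∩ unitCube b =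
      piFinset fun i => Icc (a i) (a i + 1) ∩ Icc (b i) (b i + 1) :=
    (piFinset_inter _ _).symm
  rw [← card_piFinset, ← hinter, card_union_add_card_inter, card_unitCube, card_unitCube, two_mul]

lemma prod_le_two_pow_pred {f : ι → ℕ} {i₀ : ι} (h₀ : f i₀ ≤ 1) (h : ∀ i, f i ≤ 2) :
    ∏ i, f i ≤ 2 ^ (card ι - 1) := by
  rw [← mul_prod_erase univ f (mem_univ i₀), ← card_univ, ← card_erase_of_mem (mem_univ i₀)]
  calc f i₀ * ∏ i ∈ univ.erase i₀, f i ≤ 1 * 2 ^ #(univ.erase i₀) :=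
        Nat.mul_le_mul h₀ (prod_le_pow_card _ _ _ fun i _ => h i)
    _ = 2 ^ #(univ.erase i₀) := one_mul _

lemma prod_eq_two_pow_pred {f : ι → ℕ} {i₀ : ι} (h₀ : f i₀ = 1) (h : ∀ i ≠ i₀, f i = 2) :
    ∏ i, f i = 2 ^ (card ι - 1) := by
  rw [← mul_prod_erase univ f (mem_univ i₀), h₀, one_mul,
    prod_congr rfl fun i hi => h i (ne_of_mem_erase hi), prod_const,
    card_erase_of_mem (mem_univ i₀), card_univ]

lemma three_mul_two_pow_pred_le_card_unitCube_union {a b : ι → ℕ} (hab : a ≠ b) :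
    3 * 2 ^ (card ι - 1) ≤ #(unitCube a ∪ unitCube b) := by
  obtain ⟨i₀, hi₀⟩ := Function.ne_iff.mp hab
  have hcard := mul_pow_sub_one (card_pos_iff.mpr ⟨i₀⟩).ne' 2
  have hprod := prod_le_two_pow_pred (f := fun i => #(Icc (a i) (a i + 1) ∩ Icc (b i) (b i + 1)))
    (card_Icc_inter_Icc_le_one_of_ne hi₀) fun i => card_Icc_inter_Icc_le_two (a i) (b i)
  have := card_unitCube_union_add_prod a b
  omega

lemma card_unitCube_union_of_adjacent {a b : ι → ℕ} {i₀ : ι} (h₀ : a i₀ + 1 = b i₀)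
    (h : ∀ i ≠ i₀, a i = b i) : #(unitCube a ∪ unitCube b) = 3 * 2 ^ (card ι - 1) := by
  have hcard := mul_pow_sub_one (card_pos_iff.mpr ⟨i₀⟩).ne' 2
  have hprod : ∏ i, #(Icc (a i) (a i + 1) ∩ Icc (b i) (b i + 1)) = 2 ^ (card ι - 1) := by
    refine prod_eq_two_pow_pred (i₀ := i₀) ?_ fun i hi => ?_
    · rw [← h₀, card_eq_one]
      exact ⟨a i₀ + 1, by ext; simp only [mem_inter, mem_Icc, mem_singleton]; omega⟩
    · rw [h i hi, inter_self, Nat.card_Icc]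
      omega
  have := card_unitCube_union_add_prod a b
  omega

end UnitCube

lemma image_vsum23 {k : ℕ} (a : Fin k → Fin 3) :
    univ.image (fun x : Fin k → Fin 2 => vsum23 x a) = unitCube (Fin.val ∘ a) := by
  ext z
  simp only [mem_image, mem_univ, true_and, unitCube, mem_piFinset, mem_Icc, Function.comp_apply]
  constructor
  · rintro ⟨x, rfl⟩ i
    have := (x i).is_lt
    simp only [vsum23]
    omega
  · intro hz
    refine ⟨fun i => ⟨z i - a i, by have := hz i; omega⟩, funext fun i => ?_⟩
    have := hz i
    simp only [vsum23]
    omega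

lemma sumSet23_eq_biUnion {k : ℕ} (L : Finset (Fin k → Fin 3)) :
    sumSet23 L = L.biUnion fun y => univ.image fun x : Fin k → Fin 2 => vsum23 x y := by
  ext z
  simp only [sumSet23, mem_image, mem_product, mem_univ, true_and, mem_biUnion, Prod.exists]
  rw [exists_comm]
  simp only [exists_and_right, and_comm]

lemma sumSet23_pair {k : ℕ} (a b : Fin k → Fin 3) :
    sumSet23 {a, b} = unitCube (Fin.val ∘ a) ∪ unitCube (Fin.val ∘ b) := by
  rw [sumSet23_eq_biUnion, biUnion_insert, singleton_biUnion, image_vsum23, image_vsum23]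

theorem min_sumset_two_element (k : ℕ) (hk : 0 < k) :
    IsLeast {n : ℕ | ∃ L : Finset (Fin k → Fin 3), L.card = 2 ∧ n = (sumSet23 L).card}
      (3 * 2 ^ (k - 1)) := by
  constructor
  · let i₀ : Fin k := ⟨0, hk⟩
    let e : Fin k → Fin 3 := Pi.single i₀ 1
    refine ⟨{0, e}, card_pair fun h => by simpa [e] using congrFun h i₀, ?_⟩
    rw [sumSet23_pair, card_unitCube_union_of_adjacent (i₀ := i₀) (by simp [e])
      fun i hi => by simp [e, hi], Fintype.card_fin]
  · rintro n ⟨L, hL, rfl⟩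
    obtain ⟨a, b, hab, rfl⟩ := card_eq_two.mp hL
    rw [sumSet23_pair]
    simpa only [Fintype.card_fin] using
      three_mul_two_pow_pred_le_card_unitCube_union (Fin.val_injective.comp_left.ne hab)
end
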